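/- arXiv:2603.21790 — 6 statements merged into one kernel-verified Lean document; each statement's English description precedes it below -/
import Mathlib

section
/- Let a, ã, b, c, c̃, δ be real numbers with b² ≤ 1. Then ‖s_a − p_{ã,b}‖² = (a − ã)² + 1 and ‖q_{b,c} − t_{c̃}‖² = (c̃ − c)² + 1 (squared Euclidean norms in ℝ³). Consequently, the closed balls of radius 1/2 centered at s_a and at p_{ã,b} intersect if and only if a = ã, and the closed balls of radius 1/2 centered at q_{b,c} and at t_{c̃} intersect if and only if c = c̃. -/
noncomputable section

/-- The point `s_a = (1 + a·cos δ, a·sin δ, 0)` in `ℝ³`. -/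
def sPt (δ a : ℝ) : EuclideanSpace ℝ (Fin 3) :=
  (WithLp.equiv 2 (Fin 3 → ℝ)).symm ![1 + a * Real.cos δ, a * Real.sin δ, 0]

/-- The point `p_{a,b} = (1 + a·cos δ − b·sin δ, a·sin δ + b·cos δ, √(1 − b²))` in `ℝ³`. -/
def pPt (δ a b : ℝ) : EuclideanSpace ℝ (Fin 3) :=
  (WithLp.equiv 2 (Fin 3 → ℝ)).symm
    ![1 + a * Real.cos δ - b * Real.sin δ, a * Real.sin δ + b * Real.cos δ,
      Real.sqrt (1 - b ^ 2)]

/-- The point `q_{b,c} = (−c, b, √(1 − b²))` in `ℝ³`. -/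
def qPt (b c : ℝ) : EuclideanSpace ℝ (Fin 3) :=
  (WithLp.equiv 2 (Fin 3 → ℝ)).symm ![-c, b, Real.sqrt (1 - b ^ 2)]

/-- The point `t_c = (−c, 0, 0)` in `ℝ³`. -/
def tPt (c : ℝ) : EuclideanSpace ℝ (Fin 3) :=
  (WithLp.equiv 2 (Fin 3 → ℝ)).symm ![-c, 0, 0]

open Metric

lemma closedBall_inter_closedBall_nonempty_iff {E : Type*} [SeminormedAddCommGroup E]
    [NormedSpace ℝ E] {δ ε : ℝ} (hδ : 0 ≤ δ) (hε : 0 ≤ ε) (x y : E) :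
    (closedBall x δ ∩ closedBall y ε).Nonempty ↔ dist x y ≤ δ + ε := by
  rw [← Set.not_disjoint_iff_nonempty_inter, disjoint_closedBall_closedBall_iff hδ hε, not_lt]

lemma dist_le_one_iff_of_norm_sub_sq_eq {E : Type*} [SeminormedAddCommGroup E] {x y : E}
    {u v : ℝ} (h : ‖x - y‖ ^ 2 = (u - v) ^ 2 + 1) : dist x y ≤ 1 ↔ u = v := by
  rw [dist_eq_norm, ← sq_le_one_iff₀ (norm_nonneg _), h, add_le_iff_nonpos_left,
    sq_nonpos_iff, sub_eq_zero]

lemma closedBall_half_inter_nonempty_iff_of_norm_sub_sq_eq {E : Type*}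
    [SeminormedAddCommGroup E] [NormedSpace ℝ E] {x y : E} {u v : ℝ}
    (h : ‖x - y‖ ^ 2 = (u - v) ^ 2 + 1) :
    (closedBall x (1 / 2) ∩ closedBall y (1 / 2)).Nonempty ↔ u = v := by
  rw [closedBall_inter_closedBall_nonempty_iff (by norm_num) (by norm_num), add_halves,
    dist_le_one_iff_of_norm_sub_sq_eq h]

lemma EuclideanSpace.norm_sub_sq_fin_three (x₀ x₁ x₂ y₀ y₁ y₂ : ℝ) :
    ‖(WithLp.equiv 2 (Fin 3 → ℝ)).symm ![x₀, x₁, x₂] -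
        (WithLp.equiv 2 (Fin 3 → ℝ)).symm ![y₀, y₁, y₂]‖ ^ 2 =
      (x₀ - y₀) ^ 2 + (x₁ - y₁) ^ 2 + (x₂ - y₂) ^ 2 := by
  simp [EuclideanSpace.real_norm_sq_eq, Fin.sum_univ_three]

/-- `(cos δ, sin δ)` and `(-sin δ, cos δ)` are orthonormal, so the planar part of the difference
contributes `(a - a')² + b²`, and the height `√(1 - b²)` the rest. -/
lemma norm_sPt_sub_pPt_sq (δ a a' : ℝ) {b : ℝ} (hb : b ^ 2 ≤ 1) :
    ‖sPt δ a - pPt δ a' b‖ ^ 2 = (a - a') ^ 2 + 1 := by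
  rw [sPt, pPt, EuclideanSpace.norm_sub_sq_fin_three]
  linear_combination ((a - a') ^ 2 + b ^ 2) * Real.cos_sq_add_sin_sq δ +
    Real.sq_sqrt (sub_nonneg.2 hb)

lemma norm_qPt_sub_tPt_sq {b : ℝ} (hb : b ^ 2 ≤ 1) (c c' : ℝ) :
    ‖qPt b c - tPt c'‖ ^ 2 = (c' - c) ^ 2 + 1 := by
  rw [qPt, tPt, EuclideanSpace.norm_sub_sq_fin_three]
  linear_combination Real.sq_sqrt (sub_nonneg.2 hb)

theorem stmt0 (a a' b c c' δ : ℝ) (hb : b ^ 2 ≤ 1) :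
    ‖sPt δ a - pPt δ a' b‖ ^ 2 = (a - a') ^ 2 + 1 ∧
    ‖qPt b c - tPt c'‖ ^ 2 = (c' - c) ^ 2 + 1 ∧
    ((Metric.closedBall (sPt δ a) (1 / 2) ∩
        Metric.closedBall (pPt δ a' b) (1 / 2)).Nonempty ↔ a = a') ∧
    ((Metric.closedBall (qPt b c) (1 / 2) ∩
        Metric.closedBall (tPt c') (1 / 2)).Nonempty ↔ c = c') := by
  have hsp := norm_sPt_sub_pPt_sq δ a a' hb
  have hqt := norm_qPt_sub_tPt_sq hb c c'
  exact ⟨hsp, hqt, closedBall_half_inter_nonempty_iff_of_norm_sub_sq_eq hsp,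
    (closedBall_half_inter_nonempty_iff_of_norm_sub_sq_eq hqt).trans eq_comm⟩
end
end

section
/- For all real a > 0, c > 0, b ∈ [0, 1], and δ ∈ [0, π/6], the following three pairs of closed balls of radius 1/2 in ℝ³ are disjoint: the balls centered at s_a and at t_c; the balls centered at s_a and at q_{b,c}; and the balls centered at p_{a,b} and at t_c. -/
noncomputable section

/-!
Two balls of radius `1/2` are disjoint once their centres are more than `1` apart. For `s - t`
and `s - q` the first coordinate alone is `1 + a cos δ + c > 1`. For `p - t` the first coordinate
exceeds `1/2` (as `b sin δ ≤ 1/2`), the second is at least `b cos δ` with `cos² δ ≥ 3/4`, and the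
third is `√(1 - b²)`, so `|p - t|² > 1/4 + 3b²/4 + (1 - b²) ≥ 1`.
-/

open Real Metric

lemma EuclideanSpace.dist_sq_equiv_symm_vec3 (x₀ x₁ x₂ y₀ y₁ y₂ : ℝ) :
    dist ((WithLp.equiv 2 (Fin 3 → ℝ)).symm ![x₀, x₁, x₂])
        ((WithLp.equiv 2 (Fin 3 → ℝ)).symm ![y₀, y₁, y₂]) ^ 2 =
      (x₀ - y₀) ^ 2 + (x₁ - y₁) ^ 2 + (x₂ - y₂) ^ 2 := by
  rw [EuclideanSpace.dist_eq, sq_sqrt (by positivity)]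
  simp [Fin.sum_univ_three, Real.dist_eq, sq_abs]

lemma disjoint_closedBall_half_vec3 {x₀ x₁ x₂ y₀ y₁ y₂ : ℝ}
    (h : 1 < (x₀ - y₀) ^ 2 + (x₁ - y₁) ^ 2 + (x₂ - y₂) ^ 2) :
    Disjoint (closedBall ((WithLp.equiv 2 (Fin 3 → ℝ)).symm ![x₀, x₁, x₂]) (1 / 2))
      (closedBall ((WithLp.equiv 2 (Fin 3 → ℝ)).symm ![y₀, y₁, y₂]) (1 / 2)) := by
  apply closedBall_disjoint_closedBall
  rw [add_halves, ← one_lt_sq_iff₀ dist_nonneg, EuclideanSpace.dist_sq_equiv_symm_vec3]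
  exact h

lemma cos_pos_and_sin_mem_Icc_of_mem_Icc_pi_div_six {δ : ℝ} (hδ : δ ∈ Set.Icc 0 (π / 6)) :
    0 < cos δ ∧ sin δ ∈ Set.Icc 0 (1 / 2) := by
  obtain ⟨hδ₀, hδ₁⟩ := hδ
  refine ⟨cos_pos_of_mem_Ioo ⟨by linarith [pi_pos], by linarith [pi_pos]⟩,
    sin_nonneg_of_nonneg_of_le_pi hδ₀ (by linarith [pi_pos]), ?_⟩
  rw [← sin_pi_div_six]
  exact sin_le_sin_of_le_of_le_pi_div_two (by linarith [pi_pos]) (by linarith [pi_pos]) hδ₁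

lemma disjoint_closedBall_sPt_tPt {a c δ : ℝ} (ha : 0 < a) (hc : 0 < c) (hcos : 0 < cos δ) :
    Disjoint (closedBall (sPt δ a) (1 / 2)) (closedBall (tPt c) (1 / 2)) := by
  apply disjoint_closedBall_half_vec3
  nlinarith [mul_pos ha hcos, sq_nonneg (a * sin δ)]

lemma disjoint_closedBall_sPt_qPt {a b c δ : ℝ} (ha : 0 < a) (hc : 0 < c) (hcos : 0 < cos δ) :
    Disjoint (closedBall (sPt δ a) (1 / 2)) (closedBall (qPt b c) (1 / 2)) := by
  apply disjoint_closedBall_half_vec3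
  nlinarith [mul_pos ha hcos, sq_nonneg (a * sin δ - b), sq_nonneg (0 - √(1 - b ^ 2))]

lemma disjoint_closedBall_pPt_tPt {a b c δ : ℝ} (ha : 0 < a) (hc : 0 < c)
    (hb : b ∈ Set.Icc 0 1) (hcos : 0 < cos δ) (hsin : sin δ ∈ Set.Icc 0 (1 / 2)) :
    Disjoint (closedBall (pPt δ a b) (1 / 2)) (closedBall (tPt c) (1 / 2)) := by
  obtain ⟨hb₀, hb₁⟩ := hb
  obtain ⟨hsin₀, hsin₁⟩ := hsin
  apply disjoint_closedBall_half_vec3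
  have hx : 1 / 2 < 1 + a * cos δ - b * sin δ - -c := by
    nlinarith [mul_pos ha hcos, mul_le_mul hb₁ hsin₁ hsin₀ zero_le_one]
  have hy : 3 / 4 * b ^ 2 ≤ (a * sin δ + b * cos δ - 0) ^ 2 := by
    have hbcos : b * cos δ ≤ a * sin δ + b * cos δ - 0 := by nlinarith [mul_nonneg ha.le hsin₀]
    have hcos_sq : 3 / 4 ≤ cos δ ^ 2 := by nlinarith [sin_sq_add_cos_sq δ]
    nlinarith [pow_le_pow_left₀ (by positivity) hbcos 2]
  have hz : (√(1 - b ^ 2) - 0) ^ 2 = 1 - b ^ 2 := by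
    rw [sub_zero, sq_sqrt (by nlinarith)]
  nlinarith

theorem stmt2 (a c b δ : ℝ) (ha : 0 < a) (hc : 0 < c) (hb : b ∈ Set.Icc (0 : ℝ) 1)
    (hδ : δ ∈ Set.Icc (0 : ℝ) (Real.pi / 6)) :
    Disjoint (Metric.closedBall (sPt δ a) (1 / 2)) (Metric.closedBall (tPt c) (1 / 2)) ∧
    Disjoint (Metric.closedBall (sPt δ a) (1 / 2)) (Metric.closedBall (qPt b c) (1 / 2)) ∧
    Disjoint (Metric.closedBall (pPt δ a b) (1 / 2)) (Metric.closedBall (tPt c) (1 / 2)) := by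
  obtain ⟨hcos, hsin⟩ := cos_pos_and_sin_mem_Icc_of_mem_Icc_pi_div_six hδ
  exact ⟨disjoint_closedBall_sPt_tPt ha hc hcos, disjoint_closedBall_sPt_qPt ha hc hcos,
    disjoint_closedBall_pPt_tPt ha hc hb hcos hsin⟩
end
end

section
/- Let P, Q, R ⊆ ℝ³ and let ◁₁, ◁₂ be generalized dominance relations. If P and Q are both x-separated and y-separated, then for all p, p' ∈ P there do not exist r, r' ∈ R with p ∈ N²[r] \ N²[r'] and p' ∈ N²[r'] \ N²[r]. In particular, no two-element subset of P is shattered by the family {N²[r] : r ∈ R}. -/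
/-- The three possible coordinate relations: `<`, `>`, or the always-true relation. -/
inductive CoordRel
  | lt
  | gt
  | top

/-- Interpretation of a coordinate relation on real numbers. -/
def CoordRel.holds : CoordRel → ℝ → ℝ → Prop
  | .lt, a, b => a < b
  | .gt, a, b => b < a
  | .top, _, _ => True

/-- A generalized dominance relation on `ℝ³`: `p ◁ q` iff in each of the three
coordinates a fixed relation (`<`, `>`, or always-true) holds. -/
def IsGenDom (rel : (Fin 3 → ℝ) → (Fin 3 → ℝ) → Prop) : Prop :=
  ∃ R : Fin 3 → CoordRel, ∀ p q, rel p q ↔ ∀ i, (R i).holds (p i) (q i)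

/-- `A` and `B` are separated in coordinate `i`: some threshold `μ` has all of `A`
strictly below and all of `B` strictly above in coordinate `i`, or vice versa. -/
def SepAt (i : Fin 3) (A B : Set (Fin 3 → ℝ)) : Prop :=
  ∃ μ : ℝ, ((∀ a ∈ A, a i < μ) ∧ ∀ b ∈ B, μ < b i) ∨
    ((∀ b ∈ B, b i < μ) ∧ ∀ a ∈ A, μ < a i)

/-- `N²[r] = {p ∈ P : ∃ q ∈ Q, p ◁₁ q and q ◁₂ r}`. -/
def N2 (P Q : Set (Fin 3 → ℝ)) (d₁ d₂ : (Fin 3 → ℝ) → (Fin 3 → ℝ) → Prop)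
    (r : Fin 3 → ℝ) : Set (Fin 3 → ℝ) :=
  {p ∈ P | ∃ q ∈ Q, d₁ p q ∧ d₂ q r}

/-- `A` is shattered by a family `F` of sets. -/
def Shatters {α : Type*} (F : Set (Set α)) (A : Set α) : Prop :=
  ∀ B ⊆ A, ∃ S ∈ F, S ∩ A = B

/-- If `P` and `Q` are separated in coordinate `i`, a coordinate relation holding
between `p i` and `q i` also holds between `p' i` and `q i` for any `p' ∈ P`. -/
lemma transfer {i : Fin 3} {P Q : Set (Fin 3 → ℝ)} (h : SepAt i P Q) (c : CoordRel)
    {p p' q : Fin 3 → ℝ} (hp : p ∈ P) (hp' : p' ∈ P) (hq : q ∈ Q)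
    (hc : c.holds (p i) (q i)) : c.holds (p' i) (q i) := by
  obtain ⟨μ, ⟨hA, hB⟩ | ⟨hB, hA⟩⟩ := h <;>
    cases c <;> simp only [CoordRel.holds] at hc ⊢ <;>
    first
      | trivial
      | linarith [hA p hp, hA p' hp', hB q hq]

lemma key {P Q : Set (Fin 3 → ℝ)} {d₁ d₂ : (Fin 3 → ℝ) → (Fin 3 → ℝ) → Prop}
    (h₁ : IsGenDom d₁) (hx : SepAt 0 P Q) (hy : SepAt 1 P Q)
    {p p' r r' : Fin 3 → ℝ} (hp : p ∈ P) (hp' : p' ∈ P)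
    (hpr : p ∈ N2 P Q d₁ d₂ r) (hp'r' : p' ∈ N2 P Q d₁ d₂ r') :
    p ∈ N2 P Q d₁ d₂ r' ∨ p' ∈ N2 P Q d₁ d₂ r := by
  obtain ⟨C, hC⟩ := h₁
  obtain ⟨-, q, hq, hd1, hd2⟩ := hpr
  obtain ⟨-, q', hq', hd1', hd2'⟩ := hp'r'
  rw [hC] at hd1 hd1'
  have swapq : ∀ z ∈ P, (C 2).holds (z 2) (q 2) → z ∈ N2 P Q d₁ d₂ r := by
    intro z hz h2
    refine ⟨hz, q, hq, (hC z q).2 (fun i => ?_), hd2⟩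
    fin_cases i
    · exact transfer hx (C 0) hp hz hq (hd1 0)
    · exact transfer hy (C 1) hp hz hq (hd1 1)
    · exact h2
  have swapq' : ∀ z ∈ P, (C 2).holds (z 2) (q' 2) → z ∈ N2 P Q d₁ d₂ r' := by
    intro z hz h2
    refine ⟨hz, q', hq', (hC z q').2 (fun i => ?_), hd2'⟩
    fin_cases i
    · exact transfer hx (C 0) hp' hz hq' (hd1' 0)
    · exact transfer hy (C 1) hp' hz hq' (hd1' 1)
    · exact h2
  have h2 := hd1 2
  have h2' := hd1' 2
  rcases hc2 : C 2 with _ | _ | _ <;> rw [hc2] at h2 h2'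
  · -- lt
    rcases le_total (p 2) (p' 2) with hle | hle
    · exact Or.inl (swapq' p hp (by rw [hc2]; exact lt_of_le_of_lt hle h2'))
    · exact Or.inr (swapq p' hp' (by rw [hc2]; exact lt_of_le_of_lt hle h2))
  · -- gt
    rcases le_total (p 2) (p' 2) with hle | hle
    · exact Or.inr (swapq p' hp' (by rw [hc2]; exact lt_of_lt_of_le h2 hle))
    · exact Or.inl (swapq' p hp (by rw [hc2]; exact lt_of_lt_of_le h2' hle))
  · -- top
    exact Or.inl (swapq' p hp (by rw [hc2]; trivial))

theorem stmt9 (P Q R : Set (Fin 3 → ℝ))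
    (d₁ d₂ : (Fin 3 → ℝ) → (Fin 3 → ℝ) → Prop)
    (h₁ : IsGenDom d₁) (h₂ : IsGenDom d₂)
    (hx : SepAt 0 P Q) (hy : SepAt 1 P Q) :
    (∀ p ∈ P, ∀ p' ∈ P, ¬ ∃ r ∈ R, ∃ r' ∈ R,
        p ∈ N2 P Q d₁ d₂ r \ N2 P Q d₁ d₂ r' ∧
        p' ∈ N2 P Q d₁ d₂ r' \ N2 P Q d₁ d₂ r) ∧
    ∀ A ⊆ P, A.ncard = 2 → ¬ Shatters ((fun r => N2 P Q d₁ d₂ r) '' R) A := by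
  have main : ∀ p ∈ P, ∀ p' ∈ P, ¬ ∃ r ∈ R, ∃ r' ∈ R,
      p ∈ N2 P Q d₁ d₂ r \ N2 P Q d₁ d₂ r' ∧
      p' ∈ N2 P Q d₁ d₂ r' \ N2 P Q d₁ d₂ r := by
    rintro p hp p' hp' ⟨r, hr, r', hr', ⟨hpr, hpnr'⟩, ⟨hp'r', hp'nr⟩⟩
    rcases key h₁ hx hy hp hp' hpr hp'r' with h | h
    · exact hpnr' h
    · exact hp'nr h
  refine ⟨main, ?_⟩
  intro A hA h2 hsh
  obtain ⟨a, b, hab, rfl⟩ := Set.ncard_eq_two.mp h2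
  obtain ⟨Sa, ⟨r, hr, rfl⟩, hSa⟩ := hsh {a} (by simp)
  obtain ⟨Sb, ⟨r', hr', rfl⟩, hSb⟩ := hsh {b} (by simp)
  have ha : a ∈ N2 P Q d₁ d₂ r := by
    have : a ∈ N2 P Q d₁ d₂ r ∩ {a, b} := by rw [hSa]; exact rfl
    exact this.1
  have hb : b ∈ N2 P Q d₁ d₂ r' := by
    have : b ∈ N2 P Q d₁ d₂ r' ∩ {a, b} := by rw [hSb]; exact rfl
    exact this.1
  have hna : a ∉ N2 P Q d₁ d₂ r' := by
    intro h
    have : a ∈ ({b} : Set _) := by rw [← hSb]; exact ⟨h, Or.inl rfl⟩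
    exact hab this
  have hnb : b ∉ N2 P Q d₁ d₂ r := by
    intro h
    have : b ∈ ({a} : Set _) := by rw [← hSa]; exact ⟨h, Or.inr rfl⟩
    exact hab this.symm
  exact main a (hA (by simp)) b (hA (by simp))
    ⟨r, hr, r', hr', ⟨ha, hna⟩, ⟨hb, hnb⟩⟩
end

section
/- Let P, Q, R ⊆ ℝ³ be finite and let ◁₁, ◁₂ be generalized dominance relations. Assume that no point of R shares a coordinate value in any of the three axes with a point of P. Then the number of distinct sets in the family {N²[r] : r ∈ R} is at most (|P| + 1)⁵¹. -/
/-- `x` lies in the same "gap" (relative to the `i`-th coordinates of points of `P`)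
as `r`, i.e. `x i` and `r i` compare the same way to every `p i`, `p ∈ P`. -/
def SG (P : Set (Fin 3 → ℝ)) (i : Fin 3) (x r : Fin 3 → ℝ) : Prop :=
  ∀ p ∈ P, ((p i < x i ↔ p i < r i) ∧ (x i < p i ↔ r i < p i))

/-- The part of `N²[r]` witnessed by points `q` that share `r`'s gap exactly in the
coordinates of `s`. -/
def Piece (P Q : Set (Fin 3 → ℝ)) (d₁ d₂ : (Fin 3 → ℝ) → (Fin 3 → ℝ) → Prop)
    (s : Finset (Fin 3)) (r : Fin 3 → ℝ) : Set (Fin 3 → ℝ) :=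
  {p ∈ P | ∃ q ∈ Q, d₁ p q ∧ d₂ q r ∧ ∀ i, (i ∈ s ↔ SG P i q r)}

/-- If `q i` is not in `r`'s gap, then any coordinate relation between `q i` and `r i`
transfers to `r'` provided `r'` lies in the same gap as `r`. -/
lemma holds_transfer {P : Set (Fin 3 → ℝ)} {r r' : Fin 3 → ℝ} {i : Fin 3}
    {q : Fin 3 → ℝ}
    (hκ : ∀ p ∈ P, (p i < r i ↔ p i < r' i))
    (hκ' : ∀ p ∈ P, (r i < p i ↔ r' i < p i))
    (hns : ¬ SG P i q r) :
    ∀ c : CoordRel, c.holds (q i) (r i) → c.holds (q i) (r' i) := by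
  intro c hc
  cases c with
  | top => trivial
  | lt =>
      by_contra h0
      have h : r' i ≤ q i := not_lt.mp h0
      refine hns fun p hp => ?_
      constructor
      · exact ⟨fun h1 => lt_trans h1 hc, fun h1 => lt_of_lt_of_le ((hκ p hp).mp h1) h⟩
      · exact ⟨fun h1 => (hκ' p hp).mpr (lt_of_le_of_lt h h1), fun h1 => lt_trans hc h1⟩
  | gt =>
      by_contra h0
      have h : q i ≤ r' i := not_lt.mp h0
      refine hns fun p hp => ?_
      constructor
      · exact ⟨fun h1 => (hκ p hp).mpr (lt_of_lt_of_le h1 h), fun h1 => lt_trans h1 hc⟩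
      · exact ⟨fun h1 => lt_trans hc h1, fun h1 => lt_of_le_of_lt h ((hκ' p hp).mp h1)⟩

/-- Being in the same gap only depends on the gap of `r`. -/
lemma SG_iff {P : Set (Fin 3 → ℝ)} {r r' : Fin 3 → ℝ}
    (hκ : ∀ i, ∀ p ∈ P, (p i < r i ↔ p i < r' i))
    (hκ' : ∀ i, ∀ p ∈ P, (r i < p i ↔ r' i < p i))
    (i : Fin 3) (q : Fin 3 → ℝ) :
    SG P i q r ↔ SG P i q r' := by
  constructor
  · intro h p hp
    exact ⟨(h p hp).1.trans (hκ i p hp), (h p hp).2.trans (hκ' i p hp)⟩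
  · intro h p hp
    exact ⟨(h p hp).1.trans (hκ i p hp).symm, (h p hp).2.trans (hκ' i p hp).symm⟩

/-- Monotonicity of a piece with at most one "shared‑gap" coordinate. -/
lemma piece_mono {P Q : Set (Fin 3 → ℝ)} {d₁ d₂ : (Fin 3 → ℝ) → (Fin 3 → ℝ) → Prop}
    {B : Fin 3 → CoordRel}
    (hB : ∀ q r, d₂ q r ↔ ∀ i, (B i).holds (q i) (r i))
    {r r' : Fin 3 → ℝ} {s : Finset (Fin 3)} {i : Fin 3}
    (hsub : ∀ j ∈ s, j = i)
    (hle : ∀ x : ℝ, (B i).holds x (r i) → (B i).holds x (r' i))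
    (ht : ∀ j q, ¬ SG P j q r → (B j).holds (q j) (r j) → (B j).holds (q j) (r' j))
    (hsg : ∀ j q, SG P j q r ↔ SG P j q r') :
    Piece P Q d₁ d₂ s r ⊆ Piece P Q d₁ d₂ s r' := by
  rintro p ⟨hp, q, hq, h1, h2, hpat⟩
  refine ⟨hp, q, hq, h1, ?_, fun j => (hpat j).trans (hsg j q)⟩
  rw [hB] at h2 ⊢
  intro j
  by_cases hj : j ∈ s
  · rcases hsub j hj with rfl
    exact hle (q j) (h2 j)
  · exact ht j q (fun hsgj => hj ((hpat j).mpr hsgj)) (h2 j)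

/-- Comparability of pieces with at most one "free" coordinate. -/
lemma piece_comp_big {P Q : Set (Fin 3 → ℝ)} {d₁ d₂ : (Fin 3 → ℝ) → (Fin 3 → ℝ) → Prop}
    {A : Fin 3 → CoordRel}
    (hA : ∀ p q, d₁ p q ↔ ∀ i, (A i).holds (p i) (q i))
    {r r' : Fin 3 → ℝ}
    (hκ : ∀ i, ∀ p ∈ P, (p i < r i ↔ p i < r' i))
    (hκ' : ∀ i, ∀ p ∈ P, (r i < p i ↔ r' i < p i))
    {s : Finset (Fin 3)} {j : Fin 3} (hsub : ∀ i, i ≠ j → i ∈ s) :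
    Piece P Q d₁ d₂ s r ⊆ Piece P Q d₁ d₂ s r' ∨
      Piece P Q d₁ d₂ s r' ⊆ Piece P Q d₁ d₂ s r := by
  by_cases hss : Piece P Q d₁ d₂ s r ⊆ Piece P Q d₁ d₂ s r'
  · exact Or.inl hss
  right
  rw [Set.not_subset] at hss
  obtain ⟨p, hpmem, hpnot⟩ := hss
  obtain ⟨hpP, q, hq, h1, h2, hpat⟩ := hpmem
  rintro x ⟨hxP, q', hq', h1', h2', hpat'⟩
  have eqc : ∀ i ∈ s, ∀ y, y ∈ P →
      ((A i).holds (y i) (q i) ↔ (A i).holds (y i) (q' i)) := by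
    intro i hi y hy
    have hsg : SG P i q r := (hpat i).mp hi
    have hsg' : SG P i q' r' := (hpat' i).mp hi
    cases hAi : A i with
    | top => exact Iff.rfl
    | lt => exact (hsg y hy).1.trans ((hκ i y hy).trans ((hsg' y hy).1).symm)
    | gt => exact (hsg y hy).2.trans ((hκ' i y hy).trans ((hsg' y hy).2).symm)
  have hdir : (∀ y : ℝ, (A j).holds y (q j) → (A j).holds y (q' j)) ∨
      (∀ y : ℝ, (A j).holds y (q' j) → (A j).holds y (q j)) := by
    rcases le_total (q j) (q' j) with h | h <;> cases hAj : A j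
    · left; intro y hy; exact lt_of_lt_of_le hy h
    · right; intro y hy; exact lt_of_le_of_lt h hy
    · left; intro y _; trivial
    · right; intro y hy; exact lt_of_lt_of_le hy h
    · left; intro y hy; exact lt_of_le_of_lt h hy
    · left; intro y _; trivial
  rcases hdir with hd | hd
  · refine absurd (⟨hpP, q', hq', ?_, h2', hpat'⟩ :
      p ∈ Piece P Q d₁ d₂ s r') hpnot
    rw [hA] at h1 ⊢
    intro i
    by_cases hij : i = j
    · subst hij; exact hd (p i) (h1 i)
    · exact (eqc i (hsub i hij) p hpP).mp (h1 i)
  · refine ⟨hxP, q, hq, ?_, h2, hpat⟩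
    rw [hA] at h1' ⊢
    intro i
    by_cases hij : i = j
    · subst hij; exact hd (x i) (h1' i)
    · exact (eqc i (hsub i hij) x hxP).mpr (h1' i)

/-- If all pieces agree then the second neighbourhoods agree. -/
lemma N2_subset_of_pieces {P Q : Set (Fin 3 → ℝ)}
    {d₁ d₂ : (Fin 3 → ℝ) → (Fin 3 → ℝ) → Prop} {r r' : Fin 3 → ℝ}
    (h : ∀ s : Finset (Fin 3), Piece P Q d₁ d₂ s r = Piece P Q d₁ d₂ s r') :
    N2 P Q d₁ d₂ r ⊆ N2 P Q d₁ d₂ r' := by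
  classical
  rintro p ⟨hp, q, hq, h1, h2⟩
  have hps : p ∈ Piece P Q d₁ d₂ (Finset.univ.filter (fun i => SG P i q r)) r :=
    ⟨hp, q, hq, h1, h2, fun i => by simp [Finset.mem_filter]⟩
  rw [h] at hps
  obtain ⟨hp', q₂, hq₂, h1₂, h2₂, -⟩ := hps
  exact ⟨hp', q₂, hq₂, h1₂, h2₂⟩

theorem stmt11 (P Q R : Set (Fin 3 → ℝ))
    (hP : P.Finite) (hQ : Q.Finite) (hR : R.Finite)
    (d₁ d₂ : (Fin 3 → ℝ) → (Fin 3 → ℝ) → Prop)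
    (h₁ : IsGenDom d₁) (h₂ : IsGenDom d₂)
    (hsep : ∀ r ∈ R, ∀ p ∈ P, ∀ i, r i ≠ p i) :
    ((fun r => N2 P Q d₁ d₂ r) '' R).ncard ≤ (P.ncard + 1) ^ 51 := by
  classical
  obtain ⟨A, hA⟩ := h₁
  obtain ⟨B, hB⟩ := h₂
  set n := P.ncard with hn
  have hsub1 : ∀ r : Fin 3 → ℝ, ∀ i : Fin 3, ({p ∈ P | p i < r i}).ncard ≤ n :=
    fun r i => Set.ncard_le_ncard (Set.sep_subset _ _) hP
  have hsub2 : ∀ (r : Fin 3 → ℝ) (s : Finset (Fin 3)),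
      (Piece P Q d₁ d₂ s r).ncard ≤ n :=
    fun r s => Set.ncard_le_ncard (fun p hp => hp.1) hP
  set sig : (Fin 3 → ℝ) → (Fin 3 → Fin (n+1)) × (Finset (Fin 3) → Fin (n+1)) :=
    fun r => (fun i => ⟨({p ∈ P | p i < r i}).ncard, Nat.lt_succ_of_le (hsub1 r i)⟩,
              fun s => ⟨(Piece P Q d₁ d₂ s r).ncard, Nat.lt_succ_of_le (hsub2 r s)⟩)
    with hsig
  have key : ∀ r ∈ R, ∀ r' ∈ R, sig r = sig r' →
      N2 P Q d₁ d₂ r = N2 P Q d₁ d₂ r' := by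
    intro r hr r' hr' hs
    have hk1 : ∀ i, ({p ∈ P | p i < r i}).ncard = ({p ∈ P | p i < r' i}).ncard := by
      intro i
      have h0 := congrFun (congrArg Prod.fst hs) i
      exact congrArg Fin.val h0
    have hk2 : ∀ s : Finset (Fin 3),
        (Piece P Q d₁ d₂ s r).ncard = (Piece P Q d₁ d₂ s r').ncard := by
      intro s
      have h0 := congrFun (congrArg Prod.snd hs) s
      exact congrArg Fin.val h0
    have hκset : ∀ i, {p ∈ P | p i < r i} = {p ∈ P | p i < r' i} := by
      intro i
      rcases le_total (r i) (r' i) with h | h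
      · refine Set.eq_of_subset_of_ncard_le ?_
          (le_of_eq (hk1 i).symm) (hP.subset (Set.sep_subset _ _))
        intro p hp
        exact ⟨hp.1, lt_of_lt_of_le hp.2 h⟩
      · refine (Set.eq_of_subset_of_ncard_le ?_
          (le_of_eq (hk1 i)) (hP.subset (Set.sep_subset _ _))).symm
        intro p hp
        exact ⟨hp.1, lt_of_lt_of_le hp.2 h⟩
    have hκ : ∀ i, ∀ p ∈ P, (p i < r i ↔ p i < r' i) := by
      intro i p hp
      constructor
      · intro h
        have hmem : p ∈ {p ∈ P | p i < r' i} :=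
          (hκset i) ▸ (show p ∈ {p ∈ P | p i < r i} from ⟨hp, h⟩)
        exact hmem.2
      · intro h
        have hmem : p ∈ {p ∈ P | p i < r i} :=
          (hκset i).symm ▸ (show p ∈ {p ∈ P | p i < r' i} from ⟨hp, h⟩)
        exact hmem.2
    have hne : ∀ (a b : ℝ), a ≠ b → (a < b ↔ ¬ b < a) :=
      fun a b hab => ⟨fun h h' => absurd h' (asymm h),
        fun h => hab.lt_or_gt.resolve_right h⟩
    have hκ' : ∀ i, ∀ p ∈ P, (r i < p i ↔ r' i < p i) := by
      intro i p hp
      rw [hne _ _ (hsep r hr p hp i), hne _ _ (hsep r' hr' p hp i)]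
      exact not_congr (hκ i p hp)
    have hκs : ∀ i, ∀ p ∈ P, (p i < r' i ↔ p i < r i) :=
      fun i p hp => (hκ i p hp).symm
    have hκ's : ∀ i, ∀ p ∈ P, (r' i < p i ↔ r i < p i) :=
      fun i p hp => (hκ' i p hp).symm
    have hsg : ∀ j q, SG P j q r ↔ SG P j q r' := SG_iff hκ hκ'
    have ht : ∀ j q, ¬ SG P j q r →
        (B j).holds (q j) (r j) → (B j).holds (q j) (r' j) :=
      fun j q hns => holds_transfer (hκ j) (hκ' j) hns (B j)
    have ht' : ∀ j q, ¬ SG P j q r' →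
        (B j).holds (q j) (r' j) → (B j).holds (q j) (r j) :=
      fun j q hns => holds_transfer (hκs j) (hκ's j) hns (B j)
    have hcomp : ∀ s : Finset (Fin 3),
        Piece P Q d₁ d₂ s r ⊆ Piece P Q d₁ d₂ s r' ∨
          Piece P Q d₁ d₂ s r' ⊆ Piece P Q d₁ d₂ s r := by
      intro s
      by_cases hcard : s.card ≤ 1
      · have hexists : ∃ i : Fin 3, ∀ j ∈ s, j = i := by
          rcases s.eq_empty_or_nonempty with rfl | ⟨i, hi⟩
          · exact ⟨0, fun j hj => absurd hj (Finset.notMem_empty j)⟩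
          · exact ⟨i, fun j hj => Finset.card_le_one.mp hcard j hj i hi⟩
        obtain ⟨i, hi⟩ := hexists
        rcases le_total (r i) (r' i) with h | h
        · cases hBi : B i with
          | lt =>
              left
              refine piece_mono hB hi ?_ ht hsg
              intro x hx; rw [hBi] at hx ⊢; exact lt_of_lt_of_le hx h
          | gt =>
              right
              refine piece_mono hB hi ?_ ht' (fun j q => (hsg j q).symm)
              intro x hx; rw [hBi] at hx ⊢; exact lt_of_le_of_lt h hx
          | top =>
              left
              refine piece_mono hB hi ?_ ht hsg
              intro x hx; rw [hBi]; trivial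
        · cases hBi : B i with
          | lt =>
              right
              refine piece_mono hB hi ?_ ht' (fun j q => (hsg j q).symm)
              intro x hx; rw [hBi] at hx ⊢; exact lt_of_lt_of_le hx h
          | gt =>
              left
              refine piece_mono hB hi ?_ ht hsg
              intro x hx; rw [hBi] at hx ⊢; exact lt_of_le_of_lt h hx
          | top =>
              left
              refine piece_mono hB hi ?_ ht hsg
              intro x hx; rw [hBi]; trivial
      · have hexists : ∃ j : Fin 3, ∀ i, i ≠ j → i ∈ s := by
          have h2 : 1 < s.card := Nat.not_le.mp hcard
          have hcc : sᶜ.card ≤ 1 := by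
            rw [Finset.card_compl]
            have h3 : Fintype.card (Fin 3) = 3 := by simp
            omega
          rcases sᶜ.eq_empty_or_nonempty with he | ⟨j, hj⟩
          · refine ⟨0, fun i _ => ?_⟩
            by_contra hi
            have hmem : i ∈ sᶜ := Finset.mem_compl.mpr hi
            rw [he] at hmem
            exact Finset.notMem_empty i hmem
          · refine ⟨j, fun i hij => ?_⟩
            by_contra hi
            exact hij (Finset.card_le_one.mp hcc i (Finset.mem_compl.mpr hi) j hj)
        obtain ⟨j, hj⟩ := hexists
        exact piece_comp_big hA hκ hκ' hj
    have hpieces : ∀ s : Finset (Fin 3),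
        Piece P Q d₁ d₂ s r = Piece P Q d₁ d₂ s r' := by
      intro s
      rcases hcomp s with h | h
      · exact Set.eq_of_subset_of_ncard_le h (le_of_eq (hk2 s).symm)
          (hP.subset fun p hp => hp.1)
      · exact (Set.eq_of_subset_of_ncard_le h (le_of_eq (hk2 s))
          (hP.subset fun p hp => hp.1)).symm
    exact Set.Subset.antisymm (N2_subset_of_pieces hpieces)
      (N2_subset_of_pieces fun s => (hpieces s).symm)
  -- Counting via the signature
  set φ : ((Fin 3 → Fin (n+1)) × (Finset (Fin 3) → Fin (n+1))) → Set (Fin 3 → ℝ) :=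
    fun σ => if h : ∃ r₀, r₀ ∈ R ∧ sig r₀ = σ then N2 P Q d₁ d₂ h.choose else ∅
    with hφ
  have himg : (fun r => N2 P Q d₁ d₂ r) '' R ⊆ φ '' Set.univ := by
    rintro S ⟨r, hr, rfl⟩
    refine ⟨sig r, Set.mem_univ _, ?_⟩
    have hex : ∃ r₀, r₀ ∈ R ∧ sig r₀ = sig r := ⟨r, hr, rfl⟩
    simp only [hφ, dif_pos hex]
    exact key _ hex.choose_spec.1 r hr hex.choose_spec.2
  have hcard1 : ((fun r => N2 P Q d₁ d₂ r) '' R).ncard ≤ (φ '' Set.univ).ncard :=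
    Set.ncard_le_ncard himg (Set.finite_univ.image φ)
  have hcard2 : (φ '' Set.univ).ncard ≤ (Set.univ :
      Set ((Fin 3 → Fin (n+1)) × (Finset (Fin 3) → Fin (n+1)))).ncard :=
    Set.ncard_image_le Set.finite_univ
  have hcard3 : (Set.univ :
      Set ((Fin 3 → Fin (n+1)) × (Finset (Fin 3) → Fin (n+1)))).ncard
      = (n+1)^3 * (n+1)^8 := by
    rw [Set.ncard_univ, Nat.card_eq_fintype_card]
    simp [Fintype.card_fun]
  have hfinal : (n+1)^3 * (n+1)^8 ≤ (n+1)^51 := by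
    rw [← pow_add]
    exact Nat.pow_le_pow_right (Nat.succ_le_succ (Nat.zero_le n)) (by norm_num)
  calc ((fun r => N2 P Q d₁ d₂ r) '' R).ncard
      ≤ (φ '' Set.univ).ncard := hcard1
    _ ≤ _ := hcard2
    _ = (n+1)^3 * (n+1)^8 := hcard3
    _ ≤ (n+1)^51 := hfinal
end

section
/- Let P, Q, R, S ⊆ ℝ³ and let ◁₁, ◁₂, ◁₃ be generalized dominance relations. Suppose that (a) P and Q are both x-separated and y-separated, or (b) Q and R are both x-separated and y-separated, or (c) R and S are both x-separated and y-separated. Then for all p, p' ∈ P there do not exist s, s' ∈ S with p ∈ N³[s] \ N³[s'] and p' ∈ N³[s'] \ N³[s]. In particular, no two-element subset of P is shattered by the family {N³[s] : s ∈ S}. -/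
/-- `N³[s] = {p ∈ P : ∃ q ∈ Q, r ∈ R with p ◁₁ q, q ◁₂ r and r ◁₃ s}`. -/
def N3 (P Q R : Set (Fin 3 → ℝ)) (d₁ d₂ d₃ : (Fin 3 → ℝ) → (Fin 3 → ℝ) → Prop)
    (s : Fin 3 → ℝ) : Set (Fin 3 → ℝ) :=
  {p ∈ P | ∃ q ∈ Q, ∃ r ∈ R, d₁ p q ∧ d₂ q r ∧ d₃ r s}

lemma cross_contra (c : CoordRel) {a b a' b' : ℝ} (h1 : c.holds a b) (h2 : c.holds a' b')
    (h3 : ¬ c.holds a b') (h4 : ¬ c.holds a' b) : False := by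
  cases c <;> simp [CoordRel.holds] at * <;> linarith

lemma sep_dichotomy {i : Fin 3} {A B : Set (Fin 3 → ℝ)} (hs : SepAt i A B) (c : CoordRel) :
    (∀ a ∈ A, ∀ b ∈ B, c.holds (a i) (b i)) ∨ (∀ a ∈ A, ∀ b ∈ B, ¬ c.holds (a i) (b i)) := by
  obtain ⟨μ, h | h⟩ := hs <;> cases c <;>
    simp only [CoordRel.holds, not_lt, not_true, not_false_iff]
  · exact Or.inl fun a ha b hb => (h.1 a ha).trans (h.2 b hb)
  · exact Or.inr fun a ha b hb => le_of_lt ((h.1 a ha).trans (h.2 b hb))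
  · exact Or.inl fun _ _ _ _ => trivial
  · exact Or.inr fun a ha b hb => le_of_lt ((h.1 b hb).trans (h.2 a ha))
  · exact Or.inl fun a ha b hb => (h.1 b hb).trans (h.2 a ha)
  · exact Or.inl fun _ _ _ _ => trivial

theorem stmt14 (P Q R S : Set (Fin 3 → ℝ))
    (d₁ d₂ d₃ : (Fin 3 → ℝ) → (Fin 3 → ℝ) → Prop)
    (h₁ : IsGenDom d₁) (h₂ : IsGenDom d₂) (h₃ : IsGenDom d₃)
    (hsep : (SepAt 0 P Q ∧ SepAt 1 P Q) ∨ (SepAt 0 Q R ∧ SepAt 1 Q R) ∨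
      (SepAt 0 R S ∧ SepAt 1 R S)) :
    (∀ p ∈ P, ∀ p' ∈ P, ¬ ∃ s ∈ S, ∃ s' ∈ S,
        p ∈ N3 P Q R d₁ d₂ d₃ s \ N3 P Q R d₁ d₂ d₃ s' ∧
        p' ∈ N3 P Q R d₁ d₂ d₃ s' \ N3 P Q R d₁ d₂ d₃ s) ∧
    ∀ A ⊆ P, A.ncard = 2 → ¬ Shatters ((fun s => N3 P Q R d₁ d₂ d₃ s) '' S) A := by

  have key : ∀ p ∈ P, ∀ p' ∈ P, ¬ ∃ s ∈ S, ∃ s' ∈ S,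
      p ∈ N3 P Q R d₁ d₂ d₃ s \ N3 P Q R d₁ d₂ d₃ s' ∧
      p' ∈ N3 P Q R d₁ d₂ d₃ s' \ N3 P Q R d₁ d₂ d₃ s := by
    rintro p hp p' hp' ⟨s, hs, s', hs', ⟨hps, hpns'⟩, ⟨hp's', hp'ns⟩⟩
    simp only [N3, Set.mem_setOf_eq] at hps hp's' hpns' hp'ns
    obtain ⟨-, q, hq, r, hr, hd1, hd2, hd3⟩ := hps
    obtain ⟨-, q', hq', r', hr', hd1', hd2', hd3'⟩ := hp's'
    rcases hsep with ⟨hx, hy⟩ | ⟨hx, hy⟩ | ⟨hx, hy⟩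
    · obtain ⟨c, hc⟩ := h₁
      rcases sep_dichotomy hx (c 0) with h0 | h0
      swap
      · exact h0 p hp q hq ((hc p q).1 hd1 0)
      rcases sep_dichotomy hy (c 1) with h1 | h1
      swap
      · exact h1 p hp q hq ((hc p q).1 hd1 1)
      have keq : ∀ x ∈ P, ∀ y ∈ Q, (d₁ x y ↔ (c 2).holds (x 2) (y 2)) := by
        intro x hx' y hy'
        rw [hc]
        refine ⟨fun h => h 2, fun h i => ?_⟩
        fin_cases i
        exacts [h0 x hx' y hy', h1 x hx' y hy', h]
      have hb1 : ¬ (c 2).holds (p 2) (q' 2) := fun h =>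
        hpns' ⟨hp, q', hq', r', hr', (keq p hp q' hq').2 h, hd2', hd3'⟩
      have hb2 : ¬ (c 2).holds (p' 2) (q 2) := fun h =>
        hp'ns ⟨hp', q, hq, r, hr, (keq p' hp' q hq).2 h, hd2, hd3⟩
      exact cross_contra (c 2) ((keq p hp q hq).1 hd1) ((keq p' hp' q' hq').1 hd1') hb1 hb2
    · obtain ⟨c, hc⟩ := h₂
      rcases sep_dichotomy hx (c 0) with h0 | h0
      swap
      · exact h0 q hq r hr ((hc q r).1 hd2 0)
      rcases sep_dichotomy hy (c 1) with h1 | h1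
      swap
      · exact h1 q hq r hr ((hc q r).1 hd2 1)
      have keq : ∀ x ∈ Q, ∀ y ∈ R, (d₂ x y ↔ (c 2).holds (x 2) (y 2)) := by
        intro x hx' y hy'
        rw [hc]
        refine ⟨fun h => h 2, fun h i => ?_⟩
        fin_cases i
        exacts [h0 x hx' y hy', h1 x hx' y hy', h]
      have hb1 : ¬ (c 2).holds (q 2) (r' 2) := fun h =>
        hpns' ⟨hp, q, hq, r', hr', hd1, (keq q hq r' hr').2 h, hd3'⟩
      have hb2 : ¬ (c 2).holds (q' 2) (r 2) := fun h =>
        hp'ns ⟨hp', q', hq', r, hr, hd1', (keq q' hq' r hr).2 h, hd3⟩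
      exact cross_contra (c 2) ((keq q hq r hr).1 hd2) ((keq q' hq' r' hr').1 hd2') hb1 hb2
    · obtain ⟨c, hc⟩ := h₃
      rcases sep_dichotomy hx (c 0) with h0 | h0
      swap
      · exact h0 r hr s hs ((hc r s).1 hd3 0)
      rcases sep_dichotomy hy (c 1) with h1 | h1
      swap
      · exact h1 r hr s hs ((hc r s).1 hd3 1)
      have keq : ∀ x ∈ R, ∀ y ∈ S, (d₃ x y ↔ (c 2).holds (x 2) (y 2)) := by
        intro x hx' y hy'
        rw [hc]
        refine ⟨fun h => h 2, fun h i => ?_⟩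
        fin_cases i
        exacts [h0 x hx' y hy', h1 x hx' y hy', h]
      have hb1 : ¬ (c 2).holds (r 2) (s' 2) := fun h =>
        hpns' ⟨hp, q, hq, r, hr, hd1, hd2, (keq r hr s' hs').2 h⟩
      have hb2 : ¬ (c 2).holds (r' 2) (s 2) := fun h =>
        hp'ns ⟨hp', q', hq', r', hr', hd1', hd2', (keq r' hr' s hs).2 h⟩
      exact cross_contra (c 2) ((keq r hr s hs).1 hd3) ((keq r' hr' s' hs').1 hd3') hb1 hb2
  refine ⟨key, ?_⟩
  intro A hA h2 hsh
  obtain ⟨p, p', hne, rfl⟩ := Set.ncard_eq_two.1 h2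
  have hpA : p ∈ ({p, p'} : Set (Fin 3 → ℝ)) := by simp
  have hp'A : p' ∈ ({p, p'} : Set (Fin 3 → ℝ)) := by simp
  obtain ⟨F, ⟨s, hs, rfl⟩, hF⟩ := hsh {p} (by simp)
  obtain ⟨F', ⟨s', hs', rfl⟩, hF'⟩ := hsh {p'} (by simp)
  have hps : p ∈ N3 P Q R d₁ d₂ d₃ s := by
    have : p ∈ N3 P Q R d₁ d₂ d₃ s ∩ {p, p'} := by rw [hF]; exact rfl
    exact this.1
  have hp's' : p' ∈ N3 P Q R d₁ d₂ d₃ s' := by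
    have : p' ∈ N3 P Q R d₁ d₂ d₃ s' ∩ {p, p'} := by rw [hF']; exact rfl
    exact this.1
  have hpns' : p ∉ N3 P Q R d₁ d₂ d₃ s' := fun h => by
    have : p ∈ ({p'} : Set (Fin 3 → ℝ)) := by rw [← hF']; exact ⟨h, hpA⟩
    exact hne (Set.mem_singleton_iff.1 this)
  have hp'ns : p' ∉ N3 P Q R d₁ d₂ d₃ s := fun h => by
    have : p' ∈ ({p} : Set (Fin 3 → ℝ)) := by rw [← hF]; exact ⟨h, hp'A⟩
    exact hne (Set.mem_singleton_iff.1 this).symm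
  exact key p (hA hpA) p' (hA hp'A)
    ⟨s, hs, s', hs', ⟨hps, hpns'⟩, ⟨hp's', hp'ns⟩⟩
end

section
/- Let n, m ≥ 1 and let S₁, …, S_m be subsets of {1, …, n} satisfying the following condition (∗): whenever k < h, k ∈ S_j \ S_i, and h ∈ S_i \ S_j, it holds that i < j. Then there exist continuous functions ℓ₁, …, ℓ_m : ℝ → ℝ such that (a) for all i ≠ j, the set {x ∈ ℝ : ℓ_i(x) = ℓ_j(x)} has at most one element (the functions form a pseudoline family), and (b) for all i ∈ {1, …, m} and k ∈ {1, …, n}, k ∈ S_i if and only if ℓ_i(k) > 0. -/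
open Finset

noncomputable def ramp (t : ℕ) (x : ℝ) : ℝ := max 0 (min 1 (x - t))

lemma ramp_cont (t : ℕ) : Continuous (ramp t) := by
  unfold ramp; fun_prop

lemma ramp_zero {t : ℕ} {x : ℝ} (h : x ≤ t) : ramp t x = 0 := by
  have h1 : min 1 (x - t) ≤ 0 := le_trans (min_le_right _ _) (by linarith)
  simp [ramp, max_eq_left h1]

lemma ramp_one {t : ℕ} {x : ℝ} (h : (t:ℝ) + 1 ≤ x) : ramp t x = 1 := by
  rw [ramp, min_eq_left (by linarith), max_eq_right (by linarith)]

lemma ramp_mid {t : ℕ} {x : ℝ} (h1 : (t:ℝ) ≤ x) (h2 : x ≤ t + 1) : ramp t x = x - t := by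
  rw [ramp, min_eq_right (by linarith), max_eq_right (by linarith)]

noncomputable def interp (n : ℕ) (w : ℕ → ℝ) (x : ℝ) : ℝ :=
  w 1 + ∑ t ∈ Finset.Ico 1 n, (w (t+1) - w t) * ramp t x

lemma interp_cont (n : ℕ) (w : ℕ → ℝ) : Continuous (interp n w) := by
  unfold interp
  exact continuous_const.add (continuous_finset_sum _ fun t _ =>
    continuous_const.mul (ramp_cont t))

lemma tele (w : ℕ → ℝ) (a : ℕ) : ∀ b, a ≤ b →
    ∑ t ∈ Finset.Ico a b, (w (t+1) - w t) = w b - w a := by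
  intro b
  induction b with
  | zero => intro h; interval_cases a; simp
  | succ b ih =>
    intro h
    rcases Nat.lt_or_ge a (b+1) with h' | h'
    · have ha : a ≤ b := by omega
      rw [Finset.sum_Ico_succ_top ha, ih ha]; ring
    · have : a = b + 1 := by omega
      subst this; simp

lemma interp_left {n : ℕ} {w : ℕ → ℝ} {x : ℝ} (h : x ≤ 1) : interp n w x = w 1 := by
  unfold interp
  rw [Finset.sum_eq_zero, add_zero]
  intro t ht
  rw [ramp_zero (le_trans h (by exact_mod_cast (Finset.mem_Ico.mp ht).1)), mul_zero]

lemma interp_right {n : ℕ} {w : ℕ → ℝ} {x : ℝ} (hn : 1 ≤ n) (h : (n:ℝ) ≤ x) :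
    interp n w x = w n := by
  unfold interp
  rw [Finset.sum_congr rfl (fun t ht => ?_), tele w 1 n hn]
  · ring
  · have ht' := Finset.mem_Ico.mp ht
    have h2 : (t:ℝ) + 1 ≤ n := by exact_mod_cast ht'.2
    rw [ramp_one (by linarith), mul_one]

lemma interp_piece {n : ℕ} {w : ℕ → ℝ} {j : ℕ} {x : ℝ} (hj1 : 1 ≤ j) (hj2 : j + 1 ≤ n)
    (hx1 : (j:ℝ) ≤ x) (hx2 : x ≤ (j:ℝ) + 1) :
    interp n w x = w j + (w (j+1) - w j) * (x - j) := by
  unfold interp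
  have hsplit : Finset.Ico 1 n = Finset.Ico 1 j ∪ Finset.Ico j n :=
    (Finset.Ico_union_Ico_eq_Ico hj1 (by omega)).symm
  have hdisj : Disjoint (Finset.Ico 1 j) (Finset.Ico j n) := by
    apply Finset.Ico_disjoint_Ico_consecutive
  rw [hsplit, Finset.sum_union hdisj]
  have h1 : ∑ t ∈ Finset.Ico 1 j, (w (t+1) - w t) * ramp t x = w j - w 1 := by
    rw [Finset.sum_congr rfl (fun t ht => ?_), tele w 1 j hj1]
    have ht' := Finset.mem_Ico.mp ht
    have h2 : (t:ℝ) + 1 ≤ j := by exact_mod_cast ht'.2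
    rw [ramp_one (by linarith), mul_one]
  have h2 : Finset.Ico j n = insert j (Finset.Ico (j+1) n) := by
    ext t
    simp only [Finset.mem_Ico, Finset.mem_insert]
    omega
  rw [h1, h2, Finset.sum_insert (by simp), Finset.sum_eq_zero (fun t ht => ?_)]
  · rw [ramp_mid hx1 hx2]; ring
  · have ht' := Finset.mem_Ico.mp ht
    rw [ramp_zero (le_trans hx2 (by exact_mod_cast ht'.1)), mul_zero]

lemma interp_sample {n : ℕ} {w : ℕ → ℝ} {j : ℕ} (hj1 : 1 ≤ j) (hj2 : j ≤ n) :
    interp n w (j:ℝ) = w j := by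
  rcases Nat.lt_or_ge j n with h | h
  · rw [interp_piece hj1 (by omega) le_rfl (by linarith)]; ring
  · have : j = n := by omega
    subst this
    exact interp_right hj1 le_rfl

lemma interp_sub {n : ℕ} {v u : ℕ → ℝ} {x : ℝ} :
    interp n (fun t => v t - u t) x = interp n v x - interp n u x := by
  unfold interp
  have : ∀ t : ℕ, ((fun t => v t - u t) (t+1) - (fun t => v t - u t) t) * ramp t x
      = (v (t+1) - v t) * ramp t x - (u (t+1) - u t) * ramp t x := fun t => by
    simp only []; ring
  rw [Finset.sum_congr rfl (fun t _ => this t), Finset.sum_sub_distrib]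
  simp only []
  ring


lemma key_s18 (n : ℕ) (hn : 1 ≤ n) (w : ℕ → ℝ) (s : ℕ) (hs : s ≤ n)
    (hneg : ∀ j, 1 ≤ j → j ≤ s → w j < 0)
    (hpos : ∀ j, j ≤ n → s < j → 0 < w j) :
    {x : ℝ | interp n w x = 0}.Subsingleton := by
  have claimA : ∀ r, 1 ≤ r → r ≤ s → ∀ x : ℝ, x ≤ (r:ℝ) → interp n w x < 0 := by
    intro r hr1
    induction r, hr1 using Nat.le_induction with
    | base =>
      intro hrs x hx
      rw [show ((1:ℕ):ℝ) = (1:ℝ) by norm_num] at hx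
      rw [interp_left hx]
      exact hneg 1 le_rfl hrs
    | succ r hr ih =>
      intro hrs x hx
      rcases le_or_gt x (r:ℝ) with h | h
      · exact ih (by omega) x h
      · have hx2 : x ≤ (r:ℝ) + 1 := by push_cast at hx; linarith
        rw [interp_piece hr (by omega) (le_of_lt h) hx2]
        have hw1 : w r < 0 := hneg r hr (by omega)
        have hw2 : w (r+1) < 0 := hneg (r+1) (by omega) hrs
        have h01 : 0 ≤ x - (r:ℝ) := by linarith
        have h02 : x - (r:ℝ) ≤ 1 := by linarith
        nlinarith
  have claimB : ∀ c r, n = r + c → s + 1 ≤ r → ∀ x : ℝ, (r:ℝ) ≤ x → 0 < interp n w x := by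
    intro c
    induction c with
    | zero =>
      intro r hrn hrs x hx
      have hr : r = n := by omega
      subst hr
      rw [interp_right hn hx]
      exact hpos r le_rfl (by omega)
    | succ c ih =>
      intro r hrn hrs x hx
      rcases le_or_gt ((r:ℝ)+1) x with h | h
      · have := ih (r+1) (by omega) (by omega) x (by push_cast; linarith)
        exact this
      · have hr1 : 1 ≤ r := by omega
        rw [interp_piece hr1 (by omega) hx (le_of_lt h)]
        have hw1 : 0 < w r := hpos r (by omega) (by omega)
        have hw2 : 0 < w (r+1) := hpos (r+1) (by omega) (by omega)
        have h01 : 0 ≤ x - (r:ℝ) := by linarith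
        have h02 : x - (r:ℝ) ≤ 1 := by linarith
        nlinarith
  intro x hx y hy
  simp only [Set.mem_setOf_eq] at hx hy
  rcases Nat.eq_zero_or_pos s with hs0 | hs1
  · exfalso
    rcases le_or_gt x 1 with h | h
    · rw [interp_left h] at hx
      have := hpos 1 hn (by omega)
      linarith
    · have := claimB (n - 1) 1 (by omega) (by omega) x (by push_cast; linarith)
      linarith
  rcases Nat.lt_or_ge s n with hsn | hsn
  swap
  · exfalso
    have hsn' : s = n := by omega
    rcases le_or_gt (n:ℝ) x with h | h
    · rw [interp_right hn h] at hx
      have := hneg n hn (by omega)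
      linarith
    · have := claimA s hs1 le_rfl x (by rw [hsn']; linarith)
      linarith
  -- 1 ≤ s < n : zeros lie in (s, s+1)
  have hloc : ∀ z : ℝ, interp n w z = 0 → (s:ℝ) < z ∧ z < (s:ℝ) + 1 := by
    intro z hz
    constructor
    · by_contra h
      push_neg at h
      have := claimA s hs1 le_rfl z h
      linarith
    · by_contra h
      push_neg at h
      have := claimB (n - (s+1)) (s+1) (by omega) le_rfl z (by push_cast; linarith)
      linarith
  obtain ⟨hx1, hx2⟩ := hloc x hx
  obtain ⟨hy1, hy2⟩ := hloc y hy
  have hfx := interp_piece (n := n) (w := w) hs1 (by omega) (le_of_lt hx1) (le_of_lt hx2)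
  have hfy := interp_piece (n := n) (w := w) hs1 (by omega) (le_of_lt hy1) (le_of_lt hy2)
  rw [hfx] at hx
  rw [hfy] at hy
  have hw1 : w s < 0 := hneg s hs1 le_rfl
  have hw2 : 0 < w (s+1) := hpos (s+1) (by omega) (by omega)
  have hΔ : 0 < w (s+1) - w s := by linarith
  have : (w (s+1) - w s) * (x - s) = (w (s+1) - w s) * (y - s) := by
    push_cast at hx hy ⊢
    linarith
  have := mul_left_cancel₀ (ne_of_gt hΔ) this
  linarith

def eexp (n k t : ℕ) : ℕ := if k ≤ t then n - (t - k) else t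

lemma eexp_self (n k : ℕ) : eexp n k k = n := by simp [eexp]

lemma eexp_lt {n k t : ℕ} (hk : k < n) (ht : t < n) (h : t ≠ k) : eexp n k t < n := by
  unfold eexp; split <;> omega

lemma eexp_inj {n k : ℕ} (hk : k < n) : Set.InjOn (eexp n k) ↑(Finset.range n) := by
  intro t1 h1 t2 h2 h
  simp only [Finset.coe_range, Set.mem_Iio] at h1 h2
  unfold eexp at h
  split at h <;> split at h <;> omega

lemma dom_bound (F : Finset ℕ) (c : ℕ → ℝ) (f : ℕ → ℕ) (E : ℕ) (b : ℝ)
    (hb : 0 ≤ b)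
    (hf : ∀ t ∈ F, f t < E) (hinj : Set.InjOn f ↑F)
    (hc : ∀ t ∈ F, |c t| ≤ b) :
    |∑ t ∈ F, c t * 5 ^ f t| ≤ b * ((5:ℝ) ^ E - 1) / 4 := by
  have h1 : |∑ t ∈ F, c t * 5 ^ f t| ≤ ∑ t ∈ F, b * (5:ℝ) ^ f t := by
    refine le_trans (Finset.abs_sum_le_sum_abs _ _) (Finset.sum_le_sum fun t ht => ?_)
    rw [abs_mul, abs_pow, abs_of_nonneg (by norm_num : (0:ℝ) ≤ 5)]
    exact mul_le_mul_of_nonneg_right (hc t ht) (by positivity)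
  have h2 : ∑ t ∈ F, (5:ℝ) ^ f t = ∑ d ∈ F.image f, (5:ℝ) ^ d :=
    (Finset.sum_image (fun x hx y hy h => hinj hx hy h)).symm
  have h3 : ∑ d ∈ F.image f, (5:ℝ) ^ d ≤ ∑ d ∈ Finset.range E, (5:ℝ) ^ d := by
    apply Finset.sum_le_sum_of_subset_of_nonneg
    · intro d hd
      obtain ⟨t, ht, rfl⟩ := Finset.mem_image.mp hd
      exact Finset.mem_range.mpr (hf t ht)
    · intro _ _ _; positivity
  have h4 : ∑ d ∈ Finset.range E, (5:ℝ) ^ d = ((5:ℝ) ^ E - 1) / 4 := by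
    rw [geom_sum_eq (by norm_num)]
    norm_num
  calc |∑ t ∈ F, c t * 5 ^ f t| ≤ ∑ t ∈ F, b * (5:ℝ) ^ f t := h1
    _ = b * ∑ t ∈ F, (5:ℝ) ^ f t := by rw [Finset.mul_sum]
    _ ≤ b * (((5:ℝ) ^ E - 1) / 4) := by
        apply mul_le_mul_of_nonneg_left _ hb
        rw [h2, ← h4]
        exact h3
    _ = b * ((5:ℝ) ^ E - 1) / 4 := by ring

lemma dominant (F : Finset ℕ) (c : ℕ → ℝ) (f : ℕ → ℕ) (t0 : ℕ) (ht0 : t0 ∈ F)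
    (b δ : ℝ) (hb : 0 < b) (hδ : |δ| < b)
    (hf : ∀ t ∈ F, t ≠ t0 → c t ≠ 0 → f t < f t0)
    (hinj : Set.InjOn f ↑F)
    (hc : ∀ t ∈ F, |c t| ≤ b) (hmain : b ≤ |c t0|) :
    (0 < c t0 → 0 < (∑ t ∈ F, c t * 5 ^ f t) + δ) ∧
    (c t0 < 0 → (∑ t ∈ F, c t * 5 ^ f t) + δ < 0) := by
  classical
  set G := (F.erase t0).filter (fun t => c t ≠ 0) with hG
  have hsum : ∑ t ∈ F, c t * 5 ^ f t = c t0 * 5 ^ f t0 + ∑ t ∈ G, c t * 5 ^ f t := by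
    rw [← Finset.add_sum_erase _ _ ht0]
    congr 1
    rw [hG, Finset.sum_filter_of_ne]
    intro x hx h
    intro hcx
    apply h
    rw [hcx, zero_mul]
  have hGsub : ∀ t ∈ G, t ∈ F := fun t ht =>
    Finset.mem_of_mem_erase (Finset.mem_filter.mp ht).1
  have hGbd : |∑ t ∈ G, c t * 5 ^ f t| ≤ b * ((5:ℝ) ^ f t0 - 1) / 4 := by
    apply dom_bound _ _ _ _ _ (le_of_lt hb)
    · intro t ht
      have h1 := Finset.mem_filter.mp ht
      exact hf t (hGsub t ht) (Finset.ne_of_mem_erase h1.1) h1.2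
    · exact hinj.mono (fun t ht => hGsub t ht)
    · intro t ht; exact hc t (hGsub t ht)
  have h5 : (1:ℝ) ≤ 5 ^ f t0 := one_le_pow₀ (by norm_num)
  have habs := abs_le.mp hGbd
  have hδ' := abs_lt.mp hδ
  constructor
  · intro hpos
    have hc0 : b ≤ c t0 := by
      rw [abs_of_pos hpos] at hmain; exact hmain
    have : b * (5:ℝ) ^ f t0 ≤ c t0 * 5 ^ f t0 :=
      mul_le_mul_of_nonneg_right hc0 (by positivity)
    rw [hsum]
    nlinarith
  · intro hneg
    have hc0 : c t0 ≤ -b := by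
      rw [abs_of_neg hneg] at hmain; linarith
    have : c t0 * 5 ^ f t0 ≤ -b * (5:ℝ) ^ f t0 :=
      mul_le_mul_of_nonneg_right hc0 (by positivity)
    rw [hsum]
    nlinarith

open Classical in
noncomputable def chi (n : ℕ) {m : ℕ} (S : Fin m → Set (Fin n)) (i : Fin m) (t : ℕ) : ℝ :=
  if ∃ h : t < n, (⟨t, h⟩ : Fin n) ∈ S i then 1 else -1

lemma chi_mem {n m : ℕ} {S : Fin m → Set (Fin n)} {i : Fin m} {k : ℕ} (hk : k < n)
    (h : (⟨k, hk⟩ : Fin n) ∈ S i) : chi n S i k = 1 := by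
  rw [chi, if_pos ⟨hk, h⟩]

lemma chi_not_mem {n m : ℕ} {S : Fin m → Set (Fin n)} {i : Fin m} {k : ℕ} (hk : k < n)
    (h : (⟨k, hk⟩ : Fin n) ∉ S i) : chi n S i k = -1 := by
  rw [chi, if_neg]
  rintro ⟨h1, h2⟩
  exact h h2

lemma chi_cases {n m : ℕ} (S : Fin m → Set (Fin n)) (i : Fin m) (t : ℕ) :
    chi n S i t = 1 ∨ chi n S i t = -1 := by
  rw [chi]; split
  · exact Or.inl rfl
  · exact Or.inr rfl

lemma chi_abs {n m : ℕ} (S : Fin m → Set (Fin n)) (i : Fin m) (t : ℕ) :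
    |chi n S i t| ≤ 1 := by
  rcases chi_cases S i t with h | h <;> rw [h] <;> norm_num

noncomputable def Vfun (n : ℕ) {m : ℕ} (S : Fin m → Set (Fin n)) (i : Fin m) (jdx : ℕ) : ℝ :=
  (∑ t ∈ Finset.range n, chi n S i t * 5 ^ eexp n (jdx - 1) t) + ((i:ℕ):ℝ) * (1/(m+1))

lemma eps_bound {m : ℕ} (i : Fin m) : 0 ≤ ((i:ℕ):ℝ) * (1/(m+1)) ∧ ((i:ℕ):ℝ) * (1/(m+1)) < 1 := by
  have h1 : (0:ℝ) ≤ ((i:ℕ):ℝ) := Nat.cast_nonneg _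
  have h2 : ((i:ℕ):ℝ) < (m:ℝ) + 1 := by
    have := i.isLt
    have : ((i:ℕ):ℝ) < (m:ℝ) := by exact_mod_cast this
    linarith
  have h3 : (0:ℝ) < (m:ℝ) + 1 := by positivity
  constructor
  · positivity
  · rw [mul_one_div, div_lt_one h3]
    exact h2

lemma Vsign {n m : ℕ} (S : Fin m → Set (Fin n)) (i : Fin m) (k : ℕ) (hk : k < n) :
    ((⟨k, hk⟩ : Fin n) ∈ S i → 0 < Vfun n S i (k+1)) ∧
    ((⟨k, hk⟩ : Fin n) ∉ S i → Vfun n S i (k+1) < 0) := by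
  have hdom := dominant (Finset.range n) (chi n S i) (eexp n k) k
    (Finset.mem_range.mpr hk) 1 (((i:ℕ):ℝ) * (1/(m+1))) one_pos
    (by rw [abs_of_nonneg (eps_bound i).1]; exact (eps_bound i).2)
    (fun t ht htne _ => by
      rw [eexp_self]
      exact eexp_lt hk (Finset.mem_range.mp ht) htne)
    (eexp_inj hk)
    (fun t _ => chi_abs S i t)
    (by
      rcases chi_cases S i k with h | h <;> rw [h] <;> norm_num)
  have hV : Vfun n S i (k+1) =
      (∑ t ∈ Finset.range n, chi n S i t * 5 ^ eexp n k t) + ((i:ℕ):ℝ) * (1/(m+1)) := by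
    rw [Vfun, Nat.add_sub_cancel]
  constructor
  · intro h
    rw [hV]
    exact hdom.1 (by rw [chi_mem hk h]; norm_num)
  · intro h
    rw [hV]
    exact hdom.2 (by rw [chi_not_mem hk h]; norm_num)

lemma Vdiff {n m : ℕ} (hn : 1 ≤ n) (S : Fin m → Set (Fin n))
    (hstar : ∀ (i j : Fin m) (k h : Fin n),
      k < h → k ∈ S j \ S i → h ∈ S i \ S j → i < j)
    (i j : Fin m) (hij : i < j) :
    ∃ s ≤ n, ∀ jdx, 1 ≤ jdx → jdx ≤ n →
      (jdx ≤ s → Vfun n S i jdx - Vfun n S j jdx < 0) ∧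
      (s < jdx → 0 < Vfun n S i jdx - Vfun n S j jdx) := by
  classical
  set c : ℕ → ℝ := fun t => chi n S i t - chi n S j t with hc
  set δ : ℝ := ((i:ℕ):ℝ) * (1/(m+1)) - ((j:ℕ):ℝ) * (1/(m+1)) with hδdef
  have hδneg : δ < 0 := by
    rw [hδdef]
    have : ((i:ℕ):ℝ) < ((j:ℕ):ℝ) := by exact_mod_cast hij
    have hm1 : (0:ℝ) < 1/((m:ℝ)+1) := by positivity
    nlinarith
  have hδabs : |δ| < 2 := by
    have h1 := eps_bound i
    have h2 := eps_bound j
    rw [abs_lt]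
    constructor <;> [skip; skip] <;> rw [hδdef] <;> push_cast <;> nlinarith [h1.1, h1.2, h2.1, h2.2]
  have hVd : ∀ k : ℕ, Vfun n S i (k+1) - Vfun n S j (k+1) =
      (∑ t ∈ Finset.range n, c t * 5 ^ eexp n k t) + δ := by
    intro k
    rw [Vfun, Vfun, Nat.add_sub_cancel, hδdef]
    rw [Finset.sum_congr rfl (fun t _ => show c t * 5 ^ eexp n k t =
      chi n S i t * 5 ^ eexp n k t - chi n S j t * 5 ^ eexp n k t by rw [hc]; ring)]
    rw [Finset.sum_sub_distrib]
    ring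
  set A : Finset ℕ := (Finset.range n).filter
    (fun t => ∃ h : t < n, (⟨t, h⟩ : Fin n) ∈ S i ∧ (⟨t, h⟩ : Fin n) ∉ S j) with hA
  set B : Finset ℕ := (Finset.range n).filter
    (fun t => ∃ h : t < n, (⟨t, h⟩ : Fin n) ∈ S j ∧ (⟨t, h⟩ : Fin n) ∉ S i) with hB
  have hAn : ∀ t ∈ A, t < n := fun t ht => Finset.mem_range.mp (Finset.mem_filter.mp ht).1
  have hBn : ∀ t ∈ B, t < n := fun t ht => Finset.mem_range.mp (Finset.mem_filter.mp ht).1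
  have hcA : ∀ t ∈ A, c t = 2 := by
    intro t ht
    obtain ⟨h1, h2, h3⟩ := (Finset.mem_filter.mp ht).2
    rw [hc]
    simp only []
    rw [chi_mem h1 h2, chi_not_mem h1 h3]
    norm_num
  have hcB : ∀ t ∈ B, c t = -2 := by
    intro t ht
    obtain ⟨h1, h2, h3⟩ := (Finset.mem_filter.mp ht).2
    rw [hc]
    simp only []
    rw [chi_not_mem h1 h3, chi_mem h1 h2]
    norm_num
  have hcnot : ∀ t, t ∉ A ∪ B → c t = 0 := by
    intro t ht
    rw [Finset.mem_union] at ht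
    push_neg at ht
    rw [hc]
    simp only []
    by_cases htn : t < n
    · by_cases hmem : (⟨t, htn⟩ : Fin n) ∈ S i
      · have : (⟨t, htn⟩ : Fin n) ∈ S j := by
          by_contra hcon
          exact absurd (Finset.mem_filter.mpr ⟨Finset.mem_range.mpr htn, htn, hmem, hcon⟩) ht.1
        rw [chi_mem htn hmem, chi_mem htn this]; ring
      · have : (⟨t, htn⟩ : Fin n) ∉ S j := by
          intro hcon
          exact absurd (Finset.mem_filter.mpr ⟨Finset.mem_range.mpr htn, htn, hcon, hmem⟩) ht.2
        rw [chi_not_mem htn hmem, chi_not_mem htn this]; ring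
    · have h1 : chi n S i t = -1 := by
        rw [chi, if_neg]; rintro ⟨h, _⟩; exact htn h
      have h2 : chi n S j t = -1 := by
        rw [chi, if_neg]; rintro ⟨h, _⟩; exact htn h
      rw [h1, h2]; ring
  have hcbound : ∀ t, |c t| ≤ 2 := by
    intro t
    rw [hc]
    simp only []
    have := chi_abs S i t
    have := chi_abs S j t
    rw [abs_le] at *
    constructor <;> [linarith [this.1]; linarith [this.2]]
  have horder : ∀ a ∈ A, ∀ b ∈ B, b < a := by
    intro a ha b hb
    obtain ⟨ha1, ha2, ha3⟩ := (Finset.mem_filter.mp ha).2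
    obtain ⟨hb1, hb2, hb3⟩ := (Finset.mem_filter.mp hb).2
    rcases lt_trichotomy a b with h | h | h
    · exfalso
      have := hstar j i ⟨a, ha1⟩ ⟨b, hb1⟩ (by exact h) ⟨ha2, ha3⟩ ⟨hb2, hb3⟩
      exact absurd hij (not_lt.mpr (le_of_lt this))
    · exfalso; subst h; exact ha3 hb2
    · exact h
  -- dominant application helper
  have hkey : ∀ (k : ℕ), k < n → ∀ (t0 : ℕ), t0 ∈ A ∪ B →
      (∀ t ∈ A ∪ B, t ≠ t0 → eexp n k t < eexp n k t0) →
      (t0 ∈ A → 0 < Vfun n S i (k+1) - Vfun n S j (k+1)) ∧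
      (t0 ∈ B → Vfun n S i (k+1) - Vfun n S j (k+1) < 0) := by
    intro k hk t0 ht0 hmax
    have ht0n : t0 < n := by
      rcases Finset.mem_union.mp ht0 with h | h
      · exact hAn t0 h
      · exact hBn t0 h
    have hdom := dominant (Finset.range n) c (eexp n k) t0 (Finset.mem_range.mpr ht0n)
      2 δ two_pos hδabs
      (fun t ht htne hct => by
        have : t ∈ A ∪ B := by
          by_contra hcon
          exact hct (hcnot t hcon)
        exact hmax t this htne)
      (eexp_inj hk)
      (fun t _ => hcbound t)
      (by
        rcases Finset.mem_union.mp ht0 with h | h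
        · rw [hcA t0 h]; norm_num
        · rw [hcB t0 h]; norm_num)
    constructor
    · intro hA0
      rw [hVd k]
      exact hdom.1 (by rw [hcA t0 hA0]; norm_num)
    · intro hB0
      rw [hVd k]
      exact hdom.2 (by rw [hcB t0 hB0]; norm_num)
  -- argmax selection
  have hargmax : ∀ k, k < n → (A ∪ B).Nonempty →
      ∃ t0 ∈ A ∪ B, (∀ t ∈ A ∪ B, t ≠ t0 → eexp n k t < eexp n k t0) ∧
        ((k ≤ t0 ∧ ∀ u ∈ A ∪ B, k ≤ u → t0 ≤ u) ∨
         ((∀ u ∈ A ∪ B, u < k) ∧ ∀ u ∈ A ∪ B, u ≤ t0)) := by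
    intro k hk hne
    have hDn : ∀ t ∈ A ∪ B, t < n := by
      intro t ht
      rcases Finset.mem_union.mp ht with h | h
      · exact hAn t h
      · exact hBn t h
    by_cases hge : ((A ∪ B).filter (fun t => k ≤ t)).Nonempty
    · set t0 := ((A ∪ B).filter (fun t => k ≤ t)).min' hge with ht0def
      have ht0mem := Finset.min'_mem _ hge
      have ht0D : t0 ∈ A ∪ B := (Finset.mem_filter.mp ht0mem).1
      have ht0k : k ≤ t0 := (Finset.mem_filter.mp ht0mem).2
      have ht0min : ∀ u ∈ A ∪ B, k ≤ u → t0 ≤ u := by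
        intro u hu hku
        exact Finset.min'_le _ _ (Finset.mem_filter.mpr ⟨hu, hku⟩)
      refine ⟨t0, ht0D, ?_, Or.inl ⟨ht0k, ht0min⟩⟩
      intro t ht htne
      have htn := hDn t ht
      have ht0n := hDn t0 ht0D
      by_cases hkt : k ≤ t
      · have := ht0min t ht hkt
        simp only [eexp]
        split_ifs <;> omega
      · simp only [eexp]
        split_ifs <;> omega
    · set t0 := (A ∪ B).max' hne with ht0def
      have ht0D := Finset.max'_mem _ hne
      have hall : ∀ u ∈ A ∪ B, u < k := by
        intro u hu
        by_contra hcon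
        exact hge ⟨u, Finset.mem_filter.mpr ⟨hu, by omega⟩⟩
      refine ⟨t0, ht0D, ?_, Or.inr ⟨hall, fun u hu => Finset.le_max' _ _ hu⟩⟩
      intro t ht htne
      have htn := hDn t ht
      have ht0n := hDn t0 ht0D
      have h1 := hall t ht
      have h2 := hall t0 ht0D
      have h3 := Finset.le_max' (A ∪ B) t ht
      simp only [eexp]
      split_ifs <;> omega
  -- case analysis on A, B
  rcases Finset.eq_empty_or_nonempty A with hAe | hAne
  · -- s = n : always negative
    refine ⟨n, le_rfl, fun jdx h1 h2 => ⟨fun _ => ?_, fun h3 => absurd h3 (by omega)⟩⟩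
    obtain ⟨k, rfl⟩ : ∃ k, jdx = k + 1 := ⟨jdx - 1, by omega⟩
    have hk : k < n := by omega
    rcases Finset.eq_empty_or_nonempty B with hBe | hBne
    · rw [hVd k, Finset.sum_eq_zero, zero_add]
      · exact hδneg
      · intro t _
        rw [hcnot t (by rw [hAe, hBe]; simp), zero_mul]
    · have hne : (A ∪ B).Nonempty := by
        obtain ⟨b, hb⟩ := hBne
        exact ⟨b, Finset.mem_union_right _ hb⟩
      obtain ⟨t0, ht0D, hmax, _⟩ := hargmax k hk hne
      have ht0B : t0 ∈ B := by
        rcases Finset.mem_union.mp ht0D with h | h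
        · rw [hAe] at h; simp at h
        · exact h
      exact (hkey k hk t0 ht0D hmax).2 ht0B
  rcases Finset.eq_empty_or_nonempty B with hBe | hBne
  · -- s = 0 : always positive
    refine ⟨0, by omega, fun jdx h1 h2 => ⟨fun h3 => absurd h3 (by omega), fun _ => ?_⟩⟩
    obtain ⟨k, rfl⟩ : ∃ k, jdx = k + 1 := ⟨jdx - 1, by omega⟩
    have hk : k < n := by omega
    have hne : (A ∪ B).Nonempty := by
      obtain ⟨a, ha⟩ := hAne
      exact ⟨a, Finset.mem_union_left _ ha⟩
    obtain ⟨t0, ht0D, hmax, _⟩ := hargmax k hk hne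
    have ht0A : t0 ∈ A := by
      rcases Finset.mem_union.mp ht0D with h | h
      · exact h
      · rw [hBe] at h; simp at h
    exact (hkey k hk t0 ht0D hmax).1 ht0A
  · -- both nonempty : s = B.max' + 1
    set bmax := B.max' hBne with hbmax
    have hbmem : bmax ∈ B := Finset.max'_mem _ _
    have hbn : bmax < n := hBn _ hbmem
    refine ⟨bmax + 1, by omega, fun jdx h1 h2 => ?_⟩
    obtain ⟨k, rfl⟩ : ∃ k, jdx = k + 1 := ⟨jdx - 1, by omega⟩
    have hk : k < n := by omega
    have hne : (A ∪ B).Nonempty := ⟨bmax, Finset.mem_union_right _ hbmem⟩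
    obtain ⟨t0, ht0D, hmax, hstruct⟩ := hargmax k hk hne
    constructor
    · intro h3
      have hkb : k ≤ bmax := by omega
      have ht0B : t0 ∈ B := by
        rcases hstruct with ⟨hk0, hmin⟩ | ⟨hall, _⟩
        · have ht0b : t0 ≤ bmax := hmin bmax (Finset.mem_union_right _ hbmem) hkb
          rcases Finset.mem_union.mp ht0D with h | h
          · exact absurd (horder t0 h bmax hbmem) (by omega)
          · exact h
        · exact absurd (hall bmax (Finset.mem_union_right _ hbmem)) (by omega)
      exact (hkey k hk t0 ht0D hmax).2 ht0B
    · intro h3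
      have hkb : bmax < k := by omega
      have ht0A : t0 ∈ A := by
        rcases Finset.mem_union.mp ht0D with h | h
        · exact h
        · exfalso
          have ht0b : t0 ≤ bmax := Finset.le_max' _ _ h
          rcases hstruct with ⟨hk0, _⟩ | ⟨_, hle⟩
          · omega
          · obtain ⟨a, ha⟩ := hAne
            have h4 := hle a (Finset.mem_union_left _ ha)
            have h5 := horder a ha bmax hbmem
            omega
      exact (hkey k hk t0 ht0D hmax).1 ht0A

theorem stmt18 (n m : ℕ) (hn : 1 ≤ n) (hm : 1 ≤ m) (S : Fin m → Set (Fin n))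
    (hstar : ∀ (i j : Fin m) (k h : Fin n),
      k < h → k ∈ S j \ S i → h ∈ S i \ S j → i < j) :
    ∃ ℓ : Fin m → ℝ → ℝ,
      (∀ i, Continuous (ℓ i)) ∧
      (∀ i j, i ≠ j → {x : ℝ | ℓ i x = ℓ j x}.Subsingleton) ∧
      (∀ i (k : Fin n), k ∈ S i ↔ 0 < ℓ i (((k : ℕ) : ℝ) + 1)) := by
  classical
  refine ⟨fun i => interp n (Vfun n S i), fun i => interp_cont n _, ?_, ?_⟩
  · have main : ∀ i j : Fin m, i < j →
        {x : ℝ | interp n (Vfun n S i) x = interp n (Vfun n S j) x}.Subsingleton := by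
      intro i j hij
      obtain ⟨s, hs, hprop⟩ := Vdiff hn S hstar i j hij
      have hset : {x : ℝ | interp n (Vfun n S i) x = interp n (Vfun n S j) x}
          = {x : ℝ | interp n (fun t => Vfun n S i t - Vfun n S j t) x = 0} := by
        ext x
        simp only [Set.mem_setOf_eq, interp_sub, sub_eq_zero]
      rw [hset]
      exact key_s18 n hn _ s hs
        (fun jdx h1 h2 => (hprop jdx h1 (le_trans h2 hs)).1 h2)
        (fun jdx h1 h2 => (hprop jdx (by omega) h1).2 h2)
    intro i j hij
    rcases lt_or_gt_of_ne hij with h | h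
    · exact main i j h
    · intro x hx y hy
      exact main j i h (Set.mem_setOf_eq ▸ (Set.mem_setOf_eq ▸ hx).symm)
        (Set.mem_setOf_eq ▸ (Set.mem_setOf_eq ▸ hy).symm)
  · intro i k
    have hk : (k:ℕ) < n := k.isLt
    have hsamp : interp n (Vfun n S i) (((k:ℕ):ℝ) + 1) = Vfun n S i ((k:ℕ)+1) := by
      have h := interp_sample (n := n) (w := Vfun n S i) (j := (k:ℕ)+1) (by omega) (by omega)
      rw [← h]
      norm_num
    simp only []
    rw [hsamp]
    have hV := Vsign S i (k:ℕ) hk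
    have hfin : (⟨(k:ℕ), hk⟩ : Fin n) = k := by
      apply Fin.ext
      rfl
    rw [hfin] at hV
    constructor
    · exact hV.1
    · intro h
      by_contra hmem
      exact absurd h (not_lt.mpr (le_of_lt (hV.2 hmem)))
end
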